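/- arXiv:1604.08348 — 3 statements merged into one kernel-verified Lean document; each statement's English description precedes it below -/
import Mathlib

section
/- The Weihrauch lattice is distributive: a ⊓ (b ⊔ c) = (a ⊓ b) ⊔ (a ⊓ c) for all Weihrauch degrees a, b, c. -/
/-!
Basic framework for Weihrauch reducibility on Baire space.

A partial multi-valued function `f :⊆ ℕ^ℕ ⇉ ℕ^ℕ` is modelled as a function
`Baire → Set Baire`, with `dom f` the set of points with nonempty value.
Type-2 computability of a partial function on Baire space (with a given
domain) is modelled via a monotone computable approximation function on
finite prefixes that converges on the domain.
-/

namespace Weihrauch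

abbrev Baire : Type := ℕ → ℕ

/-- Partial multi-valued functions on Baire space. -/
abbrev MV : Type := Baire → Set Baire

/-- The domain of a multi-valued function. -/
def dom (f : MV) : Set Baire := {p | (f p).Nonempty}

/-- `F` is a realizer of `f`. -/
def Realizes (F : Baire → Baire) (f : MV) : Prop := ∀ p ∈ dom f, F p ∈ f p

/-- The length-`k` prefix of a point of Baire space. -/
def pre (p : Baire) (k : ℕ) : List ℕ := List.ofFn (fun i : Fin k => p i)

/-- `F` is a computable partial function whose domain includes `D`:
there is a computable monotone approximation that converges to `F` on `D`. -/
def ComputableOn (F : Baire → Baire) (D : Set Baire) : Prop :=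
  ∃ φ : List ℕ → ℕ → Option ℕ, Computable₂ φ ∧
    (∀ u v n y, u <+: v → φ u n = some y → φ v n = some y) ∧
    (∀ p ∈ D, ∀ n, ∃ k, φ (pre p k) n = some (F p n))

/-- A computable pairing on Baire space. -/
def pair (p q : Baire) : Baire := fun n => if n % 2 = 0 then p (n / 2) else q (n / 2)

/-- Weihrauch reducibility: `f ≤_W g` via computable `K, H` such that
`p ↦ K⟨p, G(H(p))⟩` realizes `f` for every realizer `G` of `g`. -/
def WRed (f g : MV) : Prop :=
  ∃ K H : Baire → Baire,
    ComputableOn H (dom f) ∧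
    ComputableOn K {r | ∃ p ∈ dom f, ∃ G : Baire → Baire, Realizes G g ∧ r = pair p (G (H p))} ∧
    ∀ G : Baire → Baire, Realizes G g → Realizes (fun p => K (pair p (G (H p)))) f

/-- Weihrauch equivalence. -/
def WEquiv (f g : MV) : Prop := WRed f g ∧ WRed g f

/-- Strong Weihrauch reducibility: `K ∘ G ∘ H` realizes `f` for every realizer `G` of `g`. -/
def SWRed (f g : MV) : Prop :=
  ∃ K H : Baire → Baire,
    ComputableOn H (dom f) ∧
    ComputableOn K {r | ∃ p ∈ dom f, ∃ G : Baire → Baire, Realizes G g ∧ r = G (H p)} ∧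
    ∀ G : Baire → Baire, Realizes G g → Realizes (K ∘ G ∘ H) f

/-- Prepend a tag to a point of Baire space. -/
def tag (i : ℕ) (p : Baire) : Baire := fun n => match n with | 0 => i | Nat.succ m => p m

/-- Remove the first entry. -/
def tl (p : Baire) : Baire := fun n => p (n + 1)

/-- First component of an (interleaved) pair. -/
def proj1 (p : Baire) : Baire := fun n => p (2 * n)

/-- Second component of an (interleaved) pair. -/
def proj2 (p : Baire) : Baire := fun n => p (2 * n + 1)

/-- The coproduct `f ⊔ g` (on Baire-space codes): a tagged input is either an input
to `f` or to `g`, and the corresponding tagged output has to be produced. -/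
def coprod (f g : MV) : MV := fun p =>
  if p 0 = 0 then tag 0 '' f (tl p) else tag 1 '' g (tl p)

/-- The meet `f ⊓ g`: `(f ⊓ g)(x, u) = ({0} × f x) ∪ ({1} × g u)`. -/
def meet (f g : MV) : MV := fun p => tag 0 '' f (proj1 p) ∪ tag 1 '' g (proj2 p)

/-- The parallel product `f × g`: `(f × g)(x, u) = f x × g u`. -/
def mprod (f g : MV) : MV := fun p =>
  {r | ∃ y ∈ f (proj1 p), ∃ v ∈ g (proj2 p), r = pair y v}

/-- Composition of multi-valued functions:
`z ∈ (f ∘ g)(x)` iff `x ∈ dom g`, `g x ⊆ dom f` and `z ∈ f y` for some `y ∈ g x`. -/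
def comp (f g : MV) : MV := fun p =>
  {r | (g p).Nonempty ∧ (∀ y ∈ g p, y ∈ dom f) ∧ ∃ y ∈ g p, r ∈ f y}

/-- The degree `1`: the identity on Baire space. -/
def one : MV := fun p => {p}

/-- `s` is (a representative of) the compositional product `f ⋆ g`, i.e. a maximum
with respect to `≤_W` of `{f' ∘ g' : f' ≤_W f ∧ g' ≤_W g}`. -/
def IsStar (f g s : MV) : Prop :=
  (∀ f' g' : MV, WRed f' f → WRed g' g → WRed (comp f' g') s) ∧
  (∃ f' g' : MV, WRed f' f ∧ WRed g' g ∧ WEquiv (comp f' g') s)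

/-- `r` is (a representative of) the implication `g → f`, i.e. a minimum with
respect to `≤_W` of `{h : f ≤_W g ⋆ h}`. -/
def IsImp (g f r : MV) : Prop :=
  (∃ s : MV, IsStar g r s ∧ WRed f s) ∧
  (∀ h s : MV, IsStar g h s → WRed f s → WRed r h)

/-! ### Auxiliary machinery for the distributivity proof -/

lemma pre_getD (p : Baire) (k i : ℕ) (h : i < k) : (pre p k).getD i 0 = p i := by
  rw [pre, List.getD_eq_getElem, List.getElem_ofFn]
  simpa [List.length_ofFn] using h

lemma getD_congr_prefix {u v : List ℕ} (huv : u <+: v) {i : ℕ} (hi : i < u.length) :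
    u.getD i 0 = v.getD i 0 := by
  obtain ⟨w, rfl⟩ := huv
  rw [List.getD_eq_getElem _ _ hi, List.getD_eq_getElem, List.getElem_append_left hi]
  simp; omega

lemma computableOn_of_primrec {F : Baire → Baire} (D : Set Baire)
    (f : ℕ → List ℕ → ℕ) (m : ℕ → ℕ) (hf : Primrec₂ f) (hm : Primrec m)
    (hmono : ∀ n u v, m n ≤ u.length → u <+: v → f n u = f n v)
    (h : ∀ p n, F p n = f n (pre p (m n))) : ComputableOn F D := by
  refine ⟨fun u n => if m n ≤ u.length then some (f n u) else none, ?_, ?_, ?_⟩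
  · apply Primrec₂.to_comp
    exact Primrec.ite
      (Primrec.nat_le.comp (hm.comp Primrec.snd) (Primrec.list_length.comp Primrec.fst))
      (Primrec.option_some.comp (hf.comp Primrec.snd Primrec.fst))
      (Primrec.const none)
  · intro u v n y huv hy
    simp only at hy ⊢
    by_cases hu : m n ≤ u.length
    · rw [if_pos hu] at hy
      rw [if_pos (le_trans hu huv.length_le), ← hmono n u v hu huv]
      exact hy
    · rw [if_neg hu] at hy; exact absurd hy (by simp)
  · intro p _ n
    refine ⟨m n, ?_⟩
    simp only
    rw [if_pos (by simp [pre, List.length_ofFn]), h p n]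

lemma primrec_bound : Primrec fun n : ℕ => 2 * n + 10 :=
  Primrec.nat_add.comp (Primrec.nat_mul.comp (.const 2) .id) (.const 10)

@[simp] lemma tag_zero' (i : ℕ) (p : Baire) : tag i p 0 = i := rfl
@[simp] lemma tag_succ' (i : ℕ) (p : Baire) (n : ℕ) : tag i p (n + 1) = p n := rfl
@[simp] lemma tl_tag' (i : ℕ) (p : Baire) : tl (tag i p) = p := funext fun _ => rfl
@[simp] lemma proj1_pair (p q : Baire) : proj1 (pair p q) = p := by
  funext n
  have h : 2 * n % 2 = 0 := by omega
  simp only [proj1, pair, if_pos h]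
  exact congrArg p (by omega)
@[simp] lemma proj2_pair (p q : Baire) : proj2 (pair p q) = q := by
  funext n
  have h : ¬ (2 * n + 1) % 2 = 0 := by omega
  simp only [proj2, pair, if_neg h]
  exact congrArg q (by omega)

lemma nonempty_meet (f g : MV) (p : Baire) :
    (meet f g p).Nonempty ↔ (f (proj1 p)).Nonempty ∨ (g (proj2 p)).Nonempty := by
  simp [meet, Set.union_nonempty, Set.image_nonempty]

lemma coprod_pos (f g : MV) {p : Baire} (h : p 0 = 0) : coprod f g p = tag 0 '' f (tl p) := by
  simp [coprod, h]
lemma coprod_neg (f g : MV) {p : Baire} (h : p 0 ≠ 0) : coprod f g p = tag 1 '' g (tl p) := by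
  simp [coprod, h]

/-! ### The four reduction functions and their computability -/

def H1f (p : Baire) : Baire :=
  tag (if proj2 p 0 = 0 then 0 else 1) (pair (proj1 p) (tl (proj2 p)))

def f1 : ℕ → List ℕ → ℕ := fun n u =>
  if n = 0 then (if u.getD 1 0 = 0 then 0 else 1)
  else if (n - 1) % 2 = 0 then u.getD (n - 1) 0 else u.getD (n + 1) 0

lemma H1f_eq (p : Baire) (n : ℕ) : H1f p n = f1 n (pre p (2 * n + 10)) := by
  unfold H1f f1
  rcases n with _ | m
  · rw [if_pos rfl, pre_getD p (2 * 0 + 10) 1 (by norm_num)]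
    simp [tag, proj2]
  · rw [if_neg (Nat.succ_ne_zero m)]
    simp only [tag, pair, proj1, proj2, tl, Nat.add_sub_cancel]
    by_cases hm : m % 2 = 0
    · rw [if_pos hm, if_pos hm, pre_getD p (2 * (m + 1) + 10) m (by omega)]
      exact congrArg p (by omega)
    · rw [if_neg hm, if_neg hm, pre_getD p (2 * (m + 1) + 10) (m + 1 + 1) (by omega)]
      exact congrArg p (by omega)

lemma mono_f1 : ∀ n u v, 2 * n + 10 ≤ u.length → u <+: v → f1 n u = f1 n v := by
  intro n u v h huv
  have aux : ∀ i, i < 2 * n + 10 → u.getD i 0 = v.getD i 0 :=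
    fun i hi => getD_congr_prefix huv (by omega)
  unfold f1
  rw [aux 1 (by omega), aux (n - 1) (by omega), aux (n + 1) (by omega)]

lemma primrec_f1 : Primrec₂ f1 := by
  unfold f1
  exact Primrec.ite (Primrec.eq.comp .fst (.const 0))
    (Primrec.ite (Primrec.eq.comp ((Primrec.list_getD 0).comp .snd (.const 1)) (.const 0))
      (.const 0) (.const 1))
    (Primrec.ite (Primrec.eq.comp (Primrec.nat_mod.comp (Primrec.pred.comp .fst) (.const 2))
        (.const 0))
      ((Primrec.list_getD 0).comp .snd (Primrec.pred.comp .fst))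
      ((Primrec.list_getD 0).comp .snd (Primrec.succ.comp .fst)))

def K1f (q : Baire) : Baire :=
  if proj2 q 1 = 0 then tag 0 (tl (tl (proj2 q)))
  else tag 1 (tag (proj2 q 0) (tl (tl (proj2 q))))

def f2 : ℕ → List ℕ → ℕ := fun n u =>
  if n = 0 then (if u.getD 3 0 = 0 then 0 else 1)
  else if u.getD 3 0 = 0 then u.getD (2 * n + 3) 0
  else if n = 1 then u.getD 1 0 else u.getD (2 * n + 1) 0

lemma K1f_eq (q : Baire) (n : ℕ) : K1f q n = f2 n (pre q (2 * n + 10)) := by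
  have h3 : proj2 q 1 = q 3 := by norm_num [proj2]
  have h1 : proj2 q 0 = q 1 := by norm_num [proj2]
  unfold K1f f2
  rw [pre_getD q (2 * n + 10) 3 (by omega), h3, h1]
  by_cases h : q 3 = 0
  · rw [if_pos h]
    rcases n with _ | m
    · rw [if_pos rfl, if_pos h]
      simp
    · rw [if_neg (Nat.succ_ne_zero m), if_pos h,
        pre_getD q (2 * (m + 1) + 10) (2 * (m + 1) + 3) (by omega)]
      simp only [tag_succ', tl, proj2]
      exact congrArg q (by omega)
  · rw [if_neg h]
    rcases n with _ | m
    · rw [if_pos rfl, if_neg h]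
      simp
    · rw [if_neg (Nat.succ_ne_zero m), if_neg h]
      rcases m with _ | k
      · rw [if_pos rfl, pre_getD q (2 * 1 + 10) 1 (by omega)]
        simp
      · rw [if_neg (by omega : ¬ (k + 1 + 1 = 1)),
          pre_getD q (2 * (k + 1 + 1) + 10) (2 * (k + 1 + 1) + 1) (by omega)]
        simp only [tag_succ', tl, proj2]
        try exact congrArg q (by omega)

lemma mono_f2 : ∀ n u v, 2 * n + 10 ≤ u.length → u <+: v → f2 n u = f2 n v := by
  intro n u v h huv
  have aux : ∀ i, i < 2 * n + 10 → u.getD i 0 = v.getD i 0 :=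
    fun i hi => getD_congr_prefix huv (by omega)
  unfold f2
  rw [aux 3 (by omega), aux (2 * n + 3) (by omega), aux 1 (by omega),
    aux (2 * n + 1) (by omega)]

lemma primrec_f2 : Primrec₂ f2 := by
  unfold f2
  have hg3 : Primrec fun a : ℕ × List ℕ => a.2.getD 3 0 :=
    (Primrec.list_getD 0).comp .snd (.const 3)
  exact Primrec.ite (Primrec.eq.comp .fst (.const 0))
    (Primrec.ite (Primrec.eq.comp hg3 (.const 0)) (.const 0) (.const 1))
    (Primrec.ite (Primrec.eq.comp hg3 (.const 0))
      ((Primrec.list_getD 0).comp .snd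
        (Primrec.nat_add.comp (Primrec.nat_mul.comp (.const 2) .fst) (.const 3)))
      (Primrec.ite (Primrec.eq.comp .fst (.const 1))
        ((Primrec.list_getD 0).comp .snd (.const 1))
        ((Primrec.list_getD 0).comp .snd
          (Primrec.nat_add.comp (Primrec.nat_mul.comp (.const 2) .fst) (.const 1)))))

def H2f (q : Baire) : Baire :=
  pair (proj1 (tl q)) (tag (if q 0 = 0 then 0 else 1) (proj2 (tl q)))

def f3 : ℕ → List ℕ → ℕ := fun n u =>
  if n % 2 = 0 then u.getD (n + 1) 0
  else if n = 1 then (if u.getD 0 0 = 0 then 0 else 1)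
  else u.getD (n - 1) 0

lemma H2f_eq (q : Baire) (n : ℕ) : H2f q n = f3 n (pre q (2 * n + 10)) := by
  unfold H2f f3
  by_cases he : n % 2 = 0
  · rw [if_pos he, pre_getD q (2 * n + 10) (n + 1) (by omega)]
    simp only [pair, if_pos he, proj1, tl]
    exact congrArg q (by omega)
  · simp only [pair, if_neg he]
    rcases n with _ | m
    · exact absurd rfl he
    · rcases m with _ | k
      · rw [if_pos rfl, pre_getD q (2 * 1 + 10) 0 (by omega)]
        simp
      · rw [if_neg (by omega : ¬ (k + 1 + 1 = 1)),
          pre_getD q (2 * (k + 1 + 1) + 10) (k + 1 + 1 - 1) (by omega)]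
        have hd : (k + 1 + 1) / 2 = k / 2 + 1 := by omega
        rw [hd, tag_succ']
        simp only [proj2, tl]
        exact congrArg q (by omega)

lemma mono_f3 : ∀ n u v, 2 * n + 10 ≤ u.length → u <+: v → f3 n u = f3 n v := by
  intro n u v h huv
  have aux : ∀ i, i < 2 * n + 10 → u.getD i 0 = v.getD i 0 :=
    fun i hi => getD_congr_prefix huv (by omega)
  unfold f3
  rw [aux (n + 1) (by omega), aux 0 (by omega), aux (n - 1) (by omega)]

lemma primrec_f3 : Primrec₂ f3 := by
  unfold f3
  exact Primrec.ite
    (Primrec.eq.comp (Primrec.nat_mod.comp .fst (.const 2)) (.const 0))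
    ((Primrec.list_getD 0).comp .snd (Primrec.succ.comp .fst))
    (Primrec.ite (Primrec.eq.comp .fst (.const 1))
      (Primrec.ite (Primrec.eq.comp ((Primrec.list_getD 0).comp .snd (.const 0)) (.const 0))
        (.const 0) (.const 1))
      ((Primrec.list_getD 0).comp .snd (Primrec.pred.comp .fst)))

def K2f (t : Baire) : Baire :=
  tag (if t 0 = 0 then 0 else 1)
    (if t 1 = 0 then tag 0 (tl (proj2 t)) else tag 1 (tl (tl (proj2 t))))

def f4 : ℕ → List ℕ → ℕ := fun n u =>
  if n = 0 then (if u.getD 0 0 = 0 then 0 else 1)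
  else if n = 1 then (if u.getD 1 0 = 0 then 0 else 1)
  else if u.getD 1 0 = 0 then u.getD (2 * n - 1) 0 else u.getD (2 * n + 1) 0

lemma K2f_eq (t : Baire) (n : ℕ) : K2f t n = f4 n (pre t (2 * n + 10)) := by
  unfold K2f f4
  rw [pre_getD t (2 * n + 10) 0 (by omega), pre_getD t (2 * n + 10) 1 (by omega)]
  rcases n with _ | m
  · rw [if_pos rfl]
    simp
  · rw [if_neg (Nat.succ_ne_zero m), tag_succ']
    rcases m with _ | k
    · rw [if_pos rfl]
      by_cases ht : t 1 = 0
      · rw [if_pos ht, if_pos ht]; simp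
      · rw [if_neg ht, if_neg ht]; simp
    · rw [if_neg (by omega : ¬ (k + 1 + 1 = 1))]
      by_cases ht : t 1 = 0
      · rw [if_pos ht, if_pos ht,
          pre_getD t (2 * (k + 1 + 1) + 10) (2 * (k + 1 + 1) - 1) (by omega)]
        simp only [tag_succ', tl, proj2]
        exact congrArg t (by omega)
      · rw [if_neg ht, if_neg ht,
          pre_getD t (2 * (k + 1 + 1) + 10) (2 * (k + 1 + 1) + 1) (by omega)]
        simp only [tag_succ', tl, proj2]
        try exact congrArg t (by omega)

lemma mono_f4 : ∀ n u v, 2 * n + 10 ≤ u.length → u <+: v → f4 n u = f4 n v := by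
  intro n u v h huv
  have aux : ∀ i, i < 2 * n + 10 → u.getD i 0 = v.getD i 0 :=
    fun i hi => getD_congr_prefix huv (by omega)
  unfold f4
  rw [aux 0 (by omega), aux 1 (by omega), aux (2 * n - 1) (by omega),
    aux (2 * n + 1) (by omega)]

lemma primrec_f4 : Primrec₂ f4 := by
  unfold f4
  have hg1 : Primrec fun a : ℕ × List ℕ => a.2.getD 1 0 :=
    (Primrec.list_getD 0).comp .snd (.const 1)
  exact Primrec.ite (Primrec.eq.comp .fst (.const 0))
    (Primrec.ite (Primrec.eq.comp ((Primrec.list_getD 0).comp .snd (.const 0)) (.const 0))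
      (.const 0) (.const 1))
    (Primrec.ite (Primrec.eq.comp .fst (.const 1))
      (Primrec.ite (Primrec.eq.comp hg1 (.const 0)) (.const 0) (.const 1))
      (Primrec.ite (Primrec.eq.comp hg1 (.const 0))
        ((Primrec.list_getD 0).comp .snd
          (Primrec.pred.comp (Primrec.nat_mul.comp (.const 2) .fst)))
        ((Primrec.list_getD 0).comp .snd
          (Primrec.nat_add.comp (Primrec.nat_mul.comp (.const 2) .fst) (.const 1)))))

/-! ### The two reductions -/

lemma red1 (a b c : MV) :
    WRed (meet a (coprod b c)) (coprod (meet a b) (meet a c)) := by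
  refine ⟨K1f, H1f,
    computableOn_of_primrec _ f1 _ primrec_f1 primrec_bound mono_f1 H1f_eq,
    computableOn_of_primrec _ f2 _ primrec_f2 primrec_bound mono_f2 K1f_eq, ?_⟩
  intro G hG p hp
  have hp' : (a (proj1 p)).Nonempty ∨ ((coprod b c) (proj2 p)).Nonempty :=
    (nonempty_meet _ _ p).1 hp
  by_cases hi : proj2 p 0 = 0
  · have hH : H1f p = tag 0 (pair (proj1 p) (tl (proj2 p))) := by
      unfold H1f; rw [if_pos hi]
    have hdom : H1f p ∈ dom (coprod (meet a b) (meet a c)) := by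
      show (_ : Set Baire).Nonempty
      rw [hH, coprod_pos _ _ (by simp), Set.image_nonempty, tl_tag', nonempty_meet,
        proj1_pair, proj2_pair]
      rcases hp' with h | h
      · exact Or.inl h
      · right; rwa [coprod_pos b c hi, Set.image_nonempty] at h
    have hr := hG _ hdom
    show K1f (pair p (G (H1f p))) ∈ meet a (coprod b c) p
    rw [hH] at hr ⊢
    rw [coprod_pos _ _ (by simp), tl_tag'] at hr
    obtain ⟨s, hs, hGs⟩ := hr
    rw [← hGs]
    simp only [meet, proj1_pair, proj2_pair] at hs
    rcases hs with ⟨y, hy, rfl⟩ | ⟨y, hy, rfl⟩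
    · have hK : K1f (pair p (tag 0 (tag 0 y))) = tag 0 y := by
        unfold K1f
        rw [proj2_pair, if_pos (by simp)]
        simp
      rw [hK]
      exact Set.mem_union_left _ ⟨y, hy, rfl⟩
    · have hK : K1f (pair p (tag 0 (tag 1 y))) = tag 1 (tag 0 y) := by
        unfold K1f
        rw [proj2_pair, if_neg (by simp)]
        simp
      rw [hK]
      refine Set.mem_union_right _ ⟨tag 0 y, ?_, rfl⟩
      rw [coprod_pos b c hi]
      exact ⟨y, hy, rfl⟩
  · have hH : H1f p = tag 1 (pair (proj1 p) (tl (proj2 p))) := by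
      unfold H1f; rw [if_neg hi]
    have hdom : H1f p ∈ dom (coprod (meet a b) (meet a c)) := by
      show (_ : Set Baire).Nonempty
      rw [hH, coprod_neg _ _ (by simp), Set.image_nonempty, tl_tag', nonempty_meet,
        proj1_pair, proj2_pair]
      rcases hp' with h | h
      · exact Or.inl h
      · right; rwa [coprod_neg b c hi, Set.image_nonempty] at h
    have hr := hG _ hdom
    show K1f (pair p (G (H1f p))) ∈ meet a (coprod b c) p
    rw [hH] at hr ⊢
    rw [coprod_neg _ _ (by simp), tl_tag'] at hr
    obtain ⟨s, hs, hGs⟩ := hr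
    rw [← hGs]
    simp only [meet, proj1_pair, proj2_pair] at hs
    rcases hs with ⟨y, hy, rfl⟩ | ⟨y, hy, rfl⟩
    · have hK : K1f (pair p (tag 1 (tag 0 y))) = tag 0 y := by
        unfold K1f
        rw [proj2_pair, if_pos (by simp)]
        simp
      rw [hK]
      exact Set.mem_union_left _ ⟨y, hy, rfl⟩
    · have hK : K1f (pair p (tag 1 (tag 1 y))) = tag 1 (tag 1 y) := by
        unfold K1f
        rw [proj2_pair, if_neg (by simp)]
        simp
      rw [hK]
      refine Set.mem_union_right _ ⟨tag 1 y, ?_, rfl⟩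
      rw [coprod_neg b c hi]
      exact ⟨y, hy, rfl⟩

lemma red2 (a b c : MV) :
    WRed (coprod (meet a b) (meet a c)) (meet a (coprod b c)) := by
  refine ⟨K2f, H2f,
    computableOn_of_primrec _ f3 _ primrec_f3 primrec_bound mono_f3 H2f_eq,
    computableOn_of_primrec _ f4 _ primrec_f4 primrec_bound mono_f4 K2f_eq, ?_⟩
  intro G hG q hq
  by_cases hj : q 0 = 0
  · have hH : H2f q = pair (proj1 (tl q)) (tag 0 (proj2 (tl q))) := by
      unfold H2f; rw [if_pos hj]
    have hq' : (a (proj1 (tl q))).Nonempty ∨ (b (proj2 (tl q))).Nonempty := by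
      have this' : (coprod (meet a b) (meet a c) q).Nonempty := hq
      rw [coprod_pos _ _ hj, Set.image_nonempty, nonempty_meet] at this'
      rcases this' with h | h
      · exact Or.inl h
      · exact Or.inr h
    have hdom : H2f q ∈ dom (meet a (coprod b c)) := by
      show (_ : Set Baire).Nonempty
      rw [hH, nonempty_meet, proj1_pair, proj2_pair, coprod_pos _ _ (by simp),
        Set.image_nonempty, tl_tag']
      exact hq'
    have hr := hG _ hdom
    show K2f (pair q (G (H2f q))) ∈ coprod (meet a b) (meet a c) q
    rw [hH] at hr ⊢
    simp only [meet, proj1_pair, proj2_pair] at hr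
    rw [coprod_pos _ _ (by simp), tl_tag'] at hr
    rcases hr with ⟨y, hy, hGy⟩ | ⟨s, hs, hGs⟩
    · rw [← hGy]
      have hK : K2f (pair q (tag 0 y)) = tag 0 (tag 0 y) := by
        unfold K2f
        have h0 : pair q (tag 0 y) 0 = q 0 := by simp [pair]
        have h1 : pair q (tag 0 y) 1 = 0 := by simp [pair]
        rw [h0, h1, if_pos hj, if_pos rfl, proj2_pair, tl_tag']
      rw [hK, coprod_pos _ _ hj]
      exact ⟨tag 0 y, Set.mem_union_left _ ⟨y, hy, rfl⟩, rfl⟩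
    · obtain ⟨y, hy, rfl⟩ := hs
      rw [← hGs]
      have hK : K2f (pair q (tag 1 (tag 0 y))) = tag 0 (tag 1 y) := by
        unfold K2f
        have h0 : pair q (tag 1 (tag 0 y)) 0 = q 0 := by simp [pair]
        have h1 : pair q (tag 1 (tag 0 y)) 1 = 1 := by simp [pair]
        rw [h0, h1, if_pos hj, if_neg one_ne_zero, proj2_pair]
        simp
      rw [hK, coprod_pos _ _ hj]
      exact ⟨tag 1 y, Set.mem_union_right _ ⟨y, hy, rfl⟩, rfl⟩
  · have hH : H2f q = pair (proj1 (tl q)) (tag 1 (proj2 (tl q))) := by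
      unfold H2f; rw [if_neg hj]
    have hq' : (a (proj1 (tl q))).Nonempty ∨ (c (proj2 (tl q))).Nonempty := by
      have this' : (coprod (meet a b) (meet a c) q).Nonempty := hq
      rw [coprod_neg _ _ hj, Set.image_nonempty, nonempty_meet] at this'
      rcases this' with h | h
      · exact Or.inl h
      · exact Or.inr h
    have hdom : H2f q ∈ dom (meet a (coprod b c)) := by
      show (_ : Set Baire).Nonempty
      rw [hH, nonempty_meet, proj1_pair, proj2_pair, coprod_neg _ _ (by simp),
        Set.image_nonempty, tl_tag']
      exact hq'
    have hr := hG _ hdom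
    show K2f (pair q (G (H2f q))) ∈ coprod (meet a b) (meet a c) q
    rw [hH] at hr ⊢
    simp only [meet, proj1_pair, proj2_pair] at hr
    rw [coprod_neg _ _ (by simp), tl_tag'] at hr
    rcases hr with ⟨y, hy, hGy⟩ | ⟨s, hs, hGs⟩
    · rw [← hGy]
      have hK : K2f (pair q (tag 0 y)) = tag 1 (tag 0 y) := by
        unfold K2f
        have h0 : pair q (tag 0 y) 0 = q 0 := by simp [pair]
        have h1 : pair q (tag 0 y) 1 = 0 := by simp [pair]
        rw [h0, h1, if_neg hj, if_pos rfl, proj2_pair, tl_tag']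
      rw [hK, coprod_neg _ _ hj]
      exact ⟨tag 0 y, Set.mem_union_left _ ⟨y, hy, rfl⟩, rfl⟩
    · obtain ⟨y, hy, rfl⟩ := hs
      rw [← hGs]
      have hK : K2f (pair q (tag 1 (tag 1 y))) = tag 1 (tag 1 y) := by
        unfold K2f
        have h0 : pair q (tag 1 (tag 1 y)) 0 = q 0 := by simp [pair]
        have h1 : pair q (tag 1 (tag 1 y)) 1 = 1 := by simp [pair]
        rw [h0, h1, if_neg hj, if_neg one_ne_zero, proj2_pair]
        simp
      rw [hK, coprod_neg _ _ hj]
      exact ⟨tag 1 y, Set.mem_union_right _ ⟨y, hy, rfl⟩, rfl⟩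

theorem weihrauch_distrib' (a b c : MV) :
    WEquiv (meet a (coprod b c)) (coprod (meet a b) (meet a c)) :=
  ⟨red1 a b c, red2 a b c⟩

/-- The Weihrauch lattice is distributive: `a ⊓ (b ⊔ c) = (a ⊓ b) ⊔ (a ⊓ c)`
for all Weihrauch degrees. -/
theorem weihrauch_distrib (a b c : MV) :
    WEquiv (meet a (coprod b c)) (coprod (meet a b) (meet a c)) := by
  exact ⟨red1 a b c, red2 a b c⟩

end Weihrauch
end

section
/- The implication satisfies the currying law a → (b → c) = (b ⋆ a) → c for Weihrauch degrees a, b, c. -/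
/-- In the Weihrauch lattice, with `⋆` the associative compositional product and
`→` its right residual (`f ≤ g ⋆ h ⟺ (g → f) ≤ h`), the implication satisfies
the currying law `a → (b → c) = (b ⋆ a) → c`. -/
theorem imp_curry {L : Type*} [PartialOrder L] (star imp : L → L → L)
    (hassoc : ∀ a b c : L, star (star a b) c = star a (star b c))
    (hres : ∀ f g h : L, f ≤ star g h ↔ imp g f ≤ h)
    (a b c : L) : imp a (imp b c) = imp (star b a) c := by
  have key : ∀ h : L, imp a (imp b c) ≤ h ↔ imp (star b a) c ≤ h := by
    intro h
    rw [← hres, ← hres, ← hres, ← hassoc]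
  exact le_antisymm ((key _).mpr le_rfl) ((key _).mp le_rfl)
end

section
/- Every multi-valued function f :⊆ X ⇉ ℕ into the natural numbers that Weihrauch-reduces to a densely realized multi-valued function g :⊆ ℕ^ℕ ⇉ ℕ^ℕ is computable. -/
/-!
Basic framework for Weihrauch reducibility on Baire space.

A partial multi-valued function `f :⊆ ℕ^ℕ ⇉ ℕ^ℕ` is modelled as a function
`Baire → Set Baire`, with `dom f` the set of points with nonempty value.
Type-2 computability of a partial function on Baire space (with a given
domain) is modelled via a monotone computable approximation function on
finite prefixes that converges on the domain.
-/

namespace Weihrauch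

/-- `g` is densely realized: `g p` is dense in Baire space for every `p ∈ dom g`. -/
def DenselyRealized (g : MV) : Prop :=
  ∀ p ∈ dom g, ∀ q : Baire, ∀ k : ℕ, ∃ r ∈ g p, ∀ i < k, r i = q i

/-! ### Auxiliary machinery for the proof of `densely_realized_computable` -/

/-- First `some` value of `f` on `{0, ..., N-1}` (earlier indices have priority). -/
def firstSome (f : ℕ → Option ℕ) : ℕ → Option ℕ
  | 0 => none
  | N + 1 => (firstSome f N).orElse fun _ => f N

theorem firstSome_eq_rec (f : ℕ → Option ℕ) (N : ℕ) :
    firstSome f N =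
      Nat.rec (motive := fun _ => Option ℕ) none (fun n ih => ih.orElse fun _ => f n) N := by
  induction N with
  | zero => rfl
  | succ N ih => simp only [firstSome, ih]

theorem firstSome_congr {f g : ℕ → Option ℕ} : ∀ {N : ℕ}, (∀ n < N, f n = g n) →
    firstSome f N = firstSome g N
  | 0, _ => rfl
  | N + 1, h => by
    simp only [firstSome, firstSome_congr (fun n hn => h n (Nat.lt_succ_of_lt hn)),
      h N (Nat.lt_succ_self N)]

theorem firstSome_mono {f : ℕ → Option ℕ} {M N : ℕ} (hMN : M ≤ N) {y : ℕ}
    (h : firstSome f M = some y) : firstSome f N = some y := by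
  induction N, hMN using Nat.le_induction with
  | base => exact h
  | succ N _ ih => simp only [firstSome, ih]; rfl

theorem firstSome_eq_some {f : ℕ → Option ℕ} : ∀ {N y : ℕ}, firstSome f N = some y →
    ∃ n < N, f n = some y
  | 0, y, h => by simp [firstSome] at h
  | N + 1, y, h => by
    rw [firstSome] at h
    cases hN : firstSome f N with
    | some z =>
      rw [hN] at h
      obtain ⟨n, hn, hfn⟩ := firstSome_eq_some (hN.trans h)
      exact ⟨n, Nat.lt_succ_of_lt hn, hfn⟩
    | none =>
      rw [hN] at h
      exact ⟨N, Nat.lt_succ_self N, h⟩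

theorem firstSome_isSome {f : ℕ → Option ℕ} : ∀ {N n : ℕ}, n < N → (f n).isSome →
    (firstSome f N).isSome
  | 0, n, hn, _ => absurd hn (Nat.not_lt_zero n)
  | N + 1, n, hn, h => by
    rw [firstSome]
    cases hN : firstSome f N with
    | some z => rfl
    | none =>
      rcases Nat.lt_succ_iff_lt_or_eq.mp hn with h' | rfl
      · have := firstSome_isSome h' h
        rw [hN] at this
        exact absurd this (by simp)
      · simpa using h

/-- Truncation of a list, implemented via `getD`. -/
def trunc (u : List ℕ) (t : ℕ) : List ℕ := (List.range t).map fun i => u.getD i 0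

/-- Interleaving of two lists into a prefix of a paired point. -/
def ileave (u w : List ℕ) (k : ℕ) : List ℕ :=
  (List.range k).map fun i => if i % 2 = 0 then u.getD (i / 2) 0 else w.getD (i / 2) 0

/-- One step of the search: `c` codes a pair `(k, w)`; if `k` fits into the known
prefix, run `φ` on the interleaving. -/
def stepF (φ : List ℕ → ℕ → Option ℕ) (u : List ℕ) (c : ℕ) : Option ℕ :=
  if (Denumerable.ofNat (ℕ × List ℕ) c).1 ≤ 2 * u.length then
    φ (ileave u (Denumerable.ofNat (ℕ × List ℕ) c).2 (Denumerable.ofNat (ℕ × List ℕ) c).1) 0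
  else none

/-- Search over all codes below the length of `u`. -/
def bsearchF (φ : List ℕ → ℕ → Option ℕ) (u : List ℕ) : Option ℕ :=
  firstSome (stepF φ u) u.length

/-- Search over all truncations of `u` (this freezes found values, giving monotonicity). -/
def asearchF (φ : List ℕ → ℕ → Option ℕ) (u : List ℕ) : Option ℕ :=
  firstSome (fun t => bsearchF φ (trunc u t)) (u.length + 1)

/-- The approximation function of the realizer we construct. -/
def phiF (φ : List ℕ → ℕ → Option ℕ) (u : List ℕ) (n : ℕ) : Option ℕ :=
  Nat.casesOn n (asearchF φ u) fun _ => some 0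

theorem length_pre (p : Baire) (k : ℕ) : (pre p k).length = k := by simp [pre]

theorem getD_pre {p : Baire} {i k : ℕ} (h : i < k) : (pre p k).getD i 0 = p i := by
  rw [List.getD_eq_getElem _ _ (by simpa [length_pre] using h)]
  simp [pre]

theorem pre_take (p : Baire) {a b : ℕ} (h : a ≤ b) : (pre p b).take a = pre p a := by
  apply List.ext_getElem (by simp [length_pre, Nat.min_eq_left h])
  intro i h1 h2
  simp [pre]

theorem pre_prefix (p : Baire) {a b : ℕ} (h : a ≤ b) : pre p a <+: pre p b := by
  rw [← pre_take p h]; exact List.take_prefix _ _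

theorem getElem_pre (p : Baire) {k i : ℕ} (h : i < (pre p k).length) : (pre p k)[i] = p i := by
  simp [pre]

theorem trunc_pre {p : Baire} {t m : ℕ} (h : t ≤ m) : trunc (pre p m) t = pre p t := by
  apply List.ext_getElem (by simp [trunc, length_pre])
  intro i h1 h2
  have hit : i < t := by simpa [trunc] using h1
  simp only [trunc, List.getElem_map, List.getElem_range, getElem_pre]
  exact getD_pre (lt_of_lt_of_le hit h)

theorem pre_congr {x y : Baire} {k : ℕ} (h : ∀ i < k, x i = y i) : pre x k = pre y k := by
  apply List.ext_getElem (by simp [length_pre])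
  intro i h1 h2
  simp only [pre, List.getElem_ofFn]
  exact h i (by simpa [length_pre] using h1)

theorem ileave_pre {p : Baire} {w : List ℕ} {k t : ℕ} (hk : k ≤ 2 * t) :
    ileave (pre p t) w k = pre (pair p fun j => w.getD j 0) k := by
  apply List.ext_getElem (by simp [ileave, length_pre])
  intro i h1 h2
  have hik : i < k := by simpa [ileave] using h1
  have hi2 : i / 2 < t := Nat.div_lt_of_lt_mul (by omega)
  simp only [ileave, List.getElem_map, List.getElem_range, getElem_pre, pair]
  split
  · exact getD_pre hi2
  · rfl

theorem phiF_computable {φ : List ℕ → ℕ → Option ℕ} (hφ : Computable₂ φ) :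
    Computable₂ (phiF φ) := by
  have hofNat : Computable fun c : ℕ => Denumerable.ofNat (ℕ × List ℕ) c :=
    Computable.ofNat _
  -- stepF is computable
  have hstep : Computable₂ (stepF φ) := by
    have hcond : Primrec fun x : List ℕ × ℕ =>
        decide ((Denumerable.ofNat (ℕ × List ℕ) x.2).1 ≤ 2 * x.1.length) :=
      Primrec.nat_le.decide.comp ((Primrec.fst.comp ((Primrec.ofNat _).comp Primrec.snd)))
        (Primrec.nat_mul.comp (Primrec.const 2) (Primrec.list_length.comp Primrec.fst))
    have hileave : Primrec fun x : List ℕ × ℕ =>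
        ileave x.1 (Denumerable.ofNat (ℕ × List ℕ) x.2).2
          (Denumerable.ofNat (ℕ × List ℕ) x.2).1 := by
      have hk : Primrec fun x : List ℕ × ℕ => (Denumerable.ofNat (ℕ × List ℕ) x.2).1 :=
        Primrec.fst.comp ((Primrec.ofNat _).comp Primrec.snd)
      have hw : Primrec fun x : List ℕ × ℕ => (Denumerable.ofNat (ℕ × List ℕ) x.2).2 :=
        Primrec.snd.comp ((Primrec.ofNat _).comp Primrec.snd)
      exact Primrec.list_map (Primrec.list_range.comp hk)
        (Primrec.ite
          (Primrec.eq.comp (Primrec.nat_mod.comp Primrec.snd (Primrec.const 2))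
            (Primrec.const 0))
          ((Primrec.list_getD 0).comp (Primrec.fst.comp Primrec.fst)
            (Primrec.nat_div.comp Primrec.snd (Primrec.const 2)))
          ((Primrec.list_getD 0).comp (hw.comp Primrec.fst)
            (Primrec.nat_div.comp Primrec.snd (Primrec.const 2))))
    have hval : Computable fun x : List ℕ × ℕ =>
        φ (ileave x.1 (Denumerable.ofNat (ℕ × List ℕ) x.2).2
          (Denumerable.ofNat (ℕ × List ℕ) x.2).1) 0 :=
      hφ.comp hileave.to_comp (Computable.const 0)
    have := Computable.cond hcond.to_comp hval (Computable.const (none : Option ℕ))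
    refine this.of_eq fun x => ?_
    by_cases h : (Denumerable.ofNat (ℕ × List ℕ) x.2).1 ≤ 2 * x.1.length <;>
      simp [stepF, h]
  -- bsearchF is computable
  have hbs : Computable (bsearchF φ) := by
    have := Computable.nat_rec (f := fun u : List ℕ => u.length)
      (g := fun _ : List ℕ => (none : Option ℕ))
      (h := fun (u : List ℕ) (x : ℕ × Option ℕ) => x.2.orElse fun _ => stepF φ u x.1)
      Primrec.list_length.to_comp (Computable.const none) ?_
    · refine this.of_eq fun u => ?_
      rw [bsearchF, firstSome_eq_rec]
    · have : Computable fun x : List ℕ × (ℕ × Option ℕ) =>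
          Option.casesOn (motive := fun _ => Option ℕ) x.2.2 (stepF φ x.1 x.2.1)
            fun z => some z :=
        Computable.option_casesOn (Computable.snd.comp Computable.snd)
          (hstep.comp Computable.fst (Computable.fst.comp Computable.snd))
          (Computable.option_some.comp Computable.snd).to₂
      have h2 : Computable fun x : List ℕ × (ℕ × Option ℕ) =>
          x.2.2.orElse fun _ => stepF φ x.1 x.2.1 :=
        this.of_eq fun x => by cases x.2.2 <;> rfl
      exact h2
  -- asearchF is computable
  have htrunc : Primrec₂ trunc :=
    Primrec.list_map (Primrec.list_range.comp Primrec.snd)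
      ((Primrec.list_getD 0).comp (Primrec.fst.comp Primrec.fst) Primrec.snd)
  have has : Computable (asearchF φ) := by
    have := Computable.nat_rec (f := fun u : List ℕ => u.length + 1)
      (g := fun _ : List ℕ => (none : Option ℕ))
      (h := fun (u : List ℕ) (x : ℕ × Option ℕ) =>
        x.2.orElse fun _ => bsearchF φ (trunc u x.1))
      (Primrec.succ.comp Primrec.list_length).to_comp (Computable.const none) ?_
    · refine this.of_eq fun u => ?_
      rw [asearchF, firstSome_eq_rec]
    · have : Computable fun x : List ℕ × (ℕ × Option ℕ) =>
          Option.casesOn (motive := fun _ => Option ℕ) x.2.2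
            (bsearchF φ (trunc x.1 x.2.1)) fun z => some z :=
        Computable.option_casesOn (Computable.snd.comp Computable.snd)
          (hbs.comp (htrunc.to_comp.comp Computable.fst
            (Computable.fst.comp Computable.snd)))
          (Computable.option_some.comp Computable.snd).to₂
      have h2 : Computable fun x : List ℕ × (ℕ × Option ℕ) =>
          x.2.2.orElse fun _ => bsearchF φ (trunc x.1 x.2.1) :=
        this.of_eq fun x => by cases x.2.2 <;> rfl
      exact h2
  -- phiF is computable
  have := Computable.nat_casesOn (f := fun x : List ℕ × ℕ => x.2)
    Computable.snd (has.comp Computable.fst)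
    (Computable.const (some 0)).to₂
  exact this.of_eq fun x => rfl
/-- Every multi-valued function `f :⊆ X ⇉ ℕ` into the natural numbers that
Weihrauch-reduces to a densely realized `g :⊆ ℕ^ℕ ⇉ ℕ^ℕ` is computable.
(Here `f` is given on names, and a name of `n : ℕ` is any point whose first
entry is `n`.) -/
theorem densely_realized_computable (f : Baire → Set ℕ) (g : MV)
    (hg : DenselyRealized g)
    (hred : WRed (fun p => {r : Baire | r 0 ∈ f p}) g) :
    ∃ F : Baire → Baire, ComputableOn F {p | (f p).Nonempty} ∧
      ∀ p, (f p).Nonempty → F p 0 ∈ f p := by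
  classical
  obtain ⟨K, H, -, ⟨φ, hφc, hφmono, hφconv⟩, hreal⟩ := hred
  have hdom : ∀ p : Baire, (f p).Nonempty →
      p ∈ dom (fun p => {r : Baire | r 0 ∈ f p}) := by
    rintro p ⟨n, hn⟩
    exact ⟨fun _ => n, hn⟩
  -- a realizer of `g` always exists
  have hGex : ∃ G : Baire → Baire, Realizes G g := by
    refine ⟨fun x => if hx : (g x).Nonempty then hx.some else x, fun x hx => ?_⟩
    have hx' : (g x).Nonempty := hx
    show (if hx : (g x).Nonempty then hx.some else x) ∈ g x
    rw [dif_pos hx']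
    exact Set.Nonempty.some_mem hx'
  obtain ⟨G0, hG0⟩ := hGex
  -- key claim: whenever φ halts on an interleaved prefix, the result is correct
  have claim : ∀ p : Baire, (f p).Nonempty → ∀ q : Baire, ∀ k y : ℕ,
      φ (pre (pair p q) k) 0 = some y → y ∈ f p := by
    intro p hp q k y hy
    have hp' := hdom p hp
    obtain ⟨G, hG, hGq⟩ : ∃ G : Baire → Baire, Realizes G g ∧ ∀ i < k, G (H p) i = q i := by
      by_cases hd : (g (H p)).Nonempty
      · obtain ⟨r, hr, hrq⟩ := hg (H p) hd q k
        refine ⟨fun x => if x = H p then r else G0 x, fun x hx => ?_, fun i hi => ?_⟩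
        · by_cases hxH : x = H p
          · subst hxH; simpa using hr
          · simpa [hxH] using hG0 x hx
        · simpa using hrq i hi
      · refine ⟨fun x => if x = H p then q else G0 x, fun x hx => ?_, fun i _ => by simp⟩
        have hxH : x ≠ H p := fun h => hd (h ▸ (hx : (g x).Nonempty))
        simpa [hxH] using hG0 x hx
    have hpre : pre (pair p (G (H p))) k = pre (pair p q) k := by
      apply pre_congr
      intro i hi
      unfold pair
      split
      · rfl
      · exact hGq (i / 2) (lt_of_le_of_lt (Nat.div_le_self i 2) hi)
    have hyk : φ (pre (pair p (G (H p))) k) 0 = some y := by rw [hpre]; exact hy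
    have hsS : pair p (G (H p)) ∈ {r | ∃ p' ∈ dom (fun p => {r : Baire | r 0 ∈ f p}),
        ∃ G' : Baire → Baire, Realizes G' g ∧ r = pair p' (G' (H p'))} :=
      ⟨p, hp', G, hG, rfl⟩
    obtain ⟨k', hk'⟩ := hφconv _ hsS 0
    have h1 := hφmono _ _ 0 y (pre_prefix _ (le_max_left k k')) hyk
    have h2 := hφmono _ _ 0 _ (pre_prefix _ (le_max_right k k')) hk'
    rw [h1] at h2
    have hyK : y = K (pair p (G (H p))) 0 := Option.some.inj h2
    have hmem : K (pair p (G (H p))) 0 ∈ f p := hreal G hG p hp'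
    rw [hyK]
    exact hmem
  -- extraction: any output of the search is correct
  have extract : ∀ p : Baire, ∀ m y : ℕ, asearchF φ (pre p m) = some y →
      (f p).Nonempty → y ∈ f p := by
    intro p m y hy hp
    rw [asearchF] at hy
    obtain ⟨t, htm, ht⟩ := firstSome_eq_some hy
    rw [trunc_pre (by simpa [length_pre] using Nat.lt_succ_iff.mp htm)] at ht
    rw [bsearchF] at ht
    obtain ⟨c, hct, hc⟩ := firstSome_eq_some ht
    rw [stepF] at hc
    by_cases hcond : (Denumerable.ofNat (ℕ × List ℕ) c).1 ≤ 2 * (pre p t).length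
    · rw [if_pos hcond] at hc
      rw [ileave_pre (by simpa [length_pre] using hcond)] at hc
      exact claim p hp _ _ _ hc
    · rw [if_neg hcond] at hc; cases hc
  -- existence: the search halts on every point of the domain
  have hex : ∀ p : Baire, (f p).Nonempty → ∃ m, (asearchF φ (pre p m)).isSome := by
    intro p hp
    have hp' := hdom p hp
    have hsS : pair p (G0 (H p)) ∈ {r | ∃ p' ∈ dom (fun p => {r : Baire | r 0 ∈ f p}),
        ∃ G' : Baire → Baire, Realizes G' g ∧ r = pair p' (G' (H p'))} :=
      ⟨p, hp', G0, hG0, rfl⟩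
    obtain ⟨k0, hk0⟩ := hφconv _ hsS 0
    set w0 : List ℕ := pre (G0 (H p)) k0 with hw0
    set c0 : ℕ := Encodable.encode ((k0, w0) : ℕ × List ℕ) with hc0
    set t0 : ℕ := max (c0 + 1) k0 with ht0
    have hkt0 : k0 ≤ t0 := le_max_right _ _
    have hstep : stepF φ (pre p t0) c0 = some (K (pair p (G0 (H p))) 0) := by
      rw [stepF]
      have hdec : Denumerable.ofNat (ℕ × List ℕ) c0 = (k0, w0) := by
        rw [hc0, Denumerable.ofNat_encode]
      rw [hdec]
      rw [if_pos (by simp only [length_pre]; omega)]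
      rw [ileave_pre (by omega)]
      have heq : pre (pair p fun j => w0.getD j 0) k0 = pre (pair p (G0 (H p))) k0 := by
        apply pre_congr
        intro i hi
        unfold pair
        split
        · rfl
        · have hik : i / 2 < k0 := lt_of_le_of_lt (Nat.div_le_self i 2) hi
          rw [hw0]
          exact getD_pre hik
      rw [heq]
      exact hk0
    refine ⟨t0, ?_⟩
    rw [asearchF]
    apply firstSome_isSome (n := t0) (by simp [length_pre])
    rw [trunc_pre (by simp [length_pre])]
    rw [bsearchF]
    apply firstSome_isSome (n := c0) (by simp only [length_pre]; omega)
    rw [hstep]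
    rfl
  -- monotonicity of the approximation
  have hmono : ∀ u v : List ℕ, ∀ n y : ℕ, u <+: v → phiF φ u n = some y →
      phiF φ v n = some y := by
    intro u v n y huv h
    match n with
    | 0 =>
      show asearchF φ v = some y
      have h' : asearchF φ u = some y := h
      have hl : u.length ≤ v.length := huv.length_le
      have hcg : ∀ t < u.length + 1,
          bsearchF φ (trunc u t) = bsearchF φ (trunc v t) := by
        intro t ht
        have htu : t ≤ u.length := Nat.lt_succ_iff.mp ht
        have : trunc u t = trunc v t := by
          apply List.ext_getElem (by simp [trunc])
          intro i h1 h2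
          have hit : i < t := by simpa [trunc] using h1
          have hiu : i < u.length := lt_of_lt_of_le hit htu
          obtain ⟨s, rfl⟩ := huv
          simp only [trunc, List.getElem_map, List.getElem_range,
            List.getD_eq_getElem?_getD, List.getElem?_append_left hiu]
        rw [this]
      rw [asearchF] at h'
      rw [firstSome_congr hcg] at h'
      exact firstSome_mono (Nat.succ_le_succ hl) h'
    | Nat.succ n => exact h
  -- assemble the realizer
  refine ⟨fun p => fun n => Nat.casesOn n
      (if h : ∃ m, (asearchF φ (pre p m)).isSome
        then (asearchF φ (pre p h.choose)).getD 0 else 0)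
      (fun _ => 0), ⟨phiF φ, phiF_computable hφc, hmono, ?_⟩, ?_⟩
  · intro p hp n
    match n with
    | 0 =>
      have h := hex p hp
      refine ⟨h.choose, ?_⟩
      obtain ⟨y, hy⟩ := Option.isSome_iff_exists.mp h.choose_spec
      show asearchF φ (pre p h.choose) = some (if h : ∃ m, (asearchF φ (pre p m)).isSome
        then (asearchF φ (pre p h.choose)).getD 0 else 0)
      rw [dif_pos h, hy]
      rfl
    | Nat.succ n => exact ⟨0, rfl⟩
  · intro p hp
    have h := hex p hp
    show (if h : ∃ m, (asearchF φ (pre p m)).isSome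
        then (asearchF φ (pre p h.choose)).getD 0 else 0) ∈ f p
    rw [dif_pos h]
    obtain ⟨y, hy⟩ := Option.isSome_iff_exists.mp h.choose_spec
    rw [hy]
    exact extract p h.choose y hy hp

end Weihrauch
end
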